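/- arXiv:2411.10884 — 2 statements merged into one kernel-verified Lean document; each statement's English description precedes it below -/
import Mathlib

section
/- Let x ∈ ℝ³ with x ≠ 0, H(x) ≠ 0, and H(x) not a scalar multiple of x. Define In = -x, B = In/‖In‖ + H(x)/‖H(x)‖ (the bisector). If Ω = α₁·In + α₂·B with α₁ > 0 and α₂ > 0, and Out = Refl(In, Ω), then there exist unique γ > 0 and λ > 0 such that λ·H(x) = x + γ·Out. That is, x is a physical point. -/
/-!
Write `Ω = P • (-x) + Q • H x` with `P = α₁ + α₂ / ‖x‖` and `Q = α₂ / ‖H x‖`. Then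
`Out = x + c • Ω = (1 - c P) • x + (c Q) • H x` with `c = 2 (In·Ω) / (Ω·Ω)`. The bisector makes
`Q ‖H x‖ = α₂ < α₁ ‖x‖ + α₂ = P ‖x‖`, so Cauchy–Schwarz gives `In·Ω > 0`, and
`2 P (In·Ω) - Ω·Ω = (P ‖x‖)² - (Q ‖H x‖)² > 0`: hence `c > 0` and `c P > 1`. As `x` and `H x` are
linearly independent, `λ • H x = x + γ • Out` means `γ (1 - c P) = -1` and `λ = γ c Q`, which has
exactly one solution, and it is positive.
-/

noncomputable section

/-- Dot product on ℝ³. -/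
def dot3 (v w : Fin 3 → ℝ) : ℝ := v 0 * w 0 + v 1 * w 1 + v 2 * w 2

/-- Euclidean norm on ℝ³. -/
def norm3 (v : Fin 3 → ℝ) : ℝ := Real.sqrt (dot3 v v)

/-- Reflection of `v` about `N`: Refl(v, N) = -v + 2((v·N)/(N·N))N. -/
def refl3 (v N : Fin 3 → ℝ) : Fin 3 → ℝ := -v + (2 * (dot3 v N / dot3 N N)) • N

open RealInnerProductSpace WithLp

theorem LinearIndependent.smul_eq_add_smul_iff {R M : Type*} [CommRing R] [AddCommGroup M]
    [Module R M] {x h : M} (hli : LinearIndependent R ![x, h]) (μ ν γ l : R) :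
    l • h = x + γ • (μ • x + ν • h) ↔ γ * μ = -1 ∧ l = γ * ν := by
  constructor
  · intro heq
    have hzero : (1 + γ * μ) • x + (γ * ν - l) • h = 0 := by
      rw [show (1 + γ * μ) • x + (γ * ν - l) • h = x + γ • (μ • x + ν • h) - l • h by module,
        ← heq, sub_self]
    obtain ⟨h1, h2⟩ := LinearIndependent.pair_iff.1 hli _ _ hzero
    exact ⟨by linear_combination h1, by linear_combination -h2⟩
  · rintro ⟨hμ, rfl⟩
    rw [smul_add, smul_smul, smul_smul, hμ, neg_one_smul, add_neg_cancel_left, mul_smul]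

theorem LinearIndependent.existsUnique_pos_smul_eq_add_smul {𝕜 M : Type*} [Field 𝕜] [LinearOrder 𝕜]
    [IsStrictOrderedRing 𝕜] [AddCommGroup M] [Module 𝕜 M] {x h : M}
    (hli : LinearIndependent 𝕜 ![x, h]) {μ ν : 𝕜} (hμ : μ < 0) (hν : 0 < ν) :
    ∃ γ l : 𝕜, 0 < γ ∧ 0 < l ∧ l • h = x + γ • (μ • x + ν • h) ∧
      ∀ γ' l' : 𝕜, l' • h = x + γ' • (μ • x + ν • h) → γ' = γ ∧ l' = l := by
  have hγ : 0 < -μ⁻¹ := neg_pos.2 (inv_lt_zero.2 hμ)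
  refine ⟨-μ⁻¹, -μ⁻¹ * ν, hγ, mul_pos hγ hν, (hli.smul_eq_add_smul_iff ..).2 ⟨?_, rfl⟩, ?_⟩
  · field_simp [hμ.ne]
  · intro γ' l' heq
    obtain ⟨hγ', rfl⟩ := (hli.smul_eq_add_smul_iff ..).1 heq
    have hγ'eq : γ' = -μ⁻¹ := by field_simp [hμ.ne]; linear_combination hγ'
    exact ⟨hγ'eq, by rw [hγ'eq]⟩

section InnerProductSpace

variable {E : Type*} [NormedAddCommGroup E] [InnerProductSpace ℝ E] {u h : E} {P Q : ℝ}

theorem inner_smul_add_smul_pos (hQ : 0 ≤ Q) (hlt : Q * ‖h‖ < P * ‖u‖) :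
    0 < ⟪u, P • u + Q • h⟫ := by
  have hu : 0 < ‖u‖ := (norm_nonneg u).lt_of_ne fun hu ↦ by
    rw [← hu, mul_zero] at hlt
    linarith [mul_nonneg hQ (norm_nonneg h)]
  have hcs : -(‖u‖ * ‖h‖) ≤ ⟪u, h⟫ := neg_le_of_abs_le (abs_real_inner_le_norm u h)
  rw [inner_add_right, real_inner_smul_right, real_inner_smul_right, real_inner_self_eq_norm_sq]
  nlinarith

theorem inner_self_smul_add_smul_lt (hQ : 0 ≤ Q) (hlt : Q * ‖h‖ < P * ‖u‖) :
    ⟪P • u + Q • h, P • u + Q • h⟫ < 2 * P * ⟪u, P • u + Q • h⟫ := by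
  have hsq : (Q * ‖h‖) ^ 2 < (P * ‖u‖) ^ 2 := pow_lt_pow_left₀ hlt (by positivity) two_ne_zero
  simp only [inner_add_left, inner_add_right, real_inner_smul_left, real_inner_smul_right,
    real_inner_comm u h]
  rw [real_inner_self_eq_norm_sq, real_inner_self_eq_norm_sq]
  nlinarith

theorem reflection_coeff_pos_and_one_lt (hQ : 0 ≤ Q) (hlt : Q * ‖h‖ < P * ‖u‖) :
    0 < 2 * (⟪u, P • u + Q • h⟫ / ⟪P • u + Q • h, P • u + Q • h⟫) ∧
      1 < 2 * (⟪u, P • u + Q • h⟫ / ⟪P • u + Q • h, P • u + Q • h⟫) * P := by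
  have hpos := inner_smul_add_smul_pos hQ hlt
  have hself : 0 < ⟪P • u + Q • h, P • u + Q • h⟫ := real_inner_self_pos.2 fun h0 ↦ by
    rw [h0, inner_zero_right] at hpos
    exact hpos.false
  refine ⟨by positivity, ?_⟩
  rw [show ∀ a b : ℝ, 2 * (a / b) * P = 2 * P * a / b by intros; ring, one_lt_div hself]
  exact inner_self_smul_add_smul_lt hQ hlt

end InnerProductSpace

theorem dot3_eq_inner (v w : Fin 3 → ℝ) :
    dot3 v w = ⟪(toLp 2 v : EuclideanSpace ℝ (Fin 3)), toLp 2 w⟫ := by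
  simp [dot3, PiLp.inner_apply, Fin.sum_univ_three, mul_comm]

theorem norm3_eq_norm (v : Fin 3 → ℝ) : norm3 v = ‖(toLp 2 v : EuclideanSpace ℝ (Fin 3))‖ := by
  rw [norm3, dot3_eq_inner, real_inner_self_eq_norm_sq, Real.sqrt_sq (norm_nonneg _)]

theorem physical_point (H : (Fin 3 → ℝ) → (Fin 3 → ℝ)) (x : Fin 3 → ℝ)
    (hx : x ≠ 0) (hHx : H x ≠ 0) (hind : ¬∃ s : ℝ, H x = s • x)
    (α₁ α₂ : ℝ) (hα₁ : 0 < α₁) (hα₂ : 0 < α₂)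
    (Ω : Fin 3 → ℝ)
    (hΩ : Ω = α₁ • (-x) + α₂ • ((norm3 (-x))⁻¹ • (-x) + (norm3 (H x))⁻¹ • H x)) :
    ∃ γ l : ℝ, 0 < γ ∧ 0 < l ∧ l • H x = x + γ • refl3 (-x) Ω ∧
      ∀ γ' l' : ℝ, 0 < γ' → 0 < l' → l' • H x = x + γ' • refl3 (-x) Ω →
        γ' = γ ∧ l' = l := by
  set P := α₁ + α₂ * (norm3 (-x))⁻¹
  set Q := α₂ * (norm3 (H x))⁻¹
  have hΩPQ : Ω = P • (-x) + Q • H x := by rw [hΩ]; module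
  have hnx : 0 < norm3 (-x) := by simpa [norm3_eq_norm] using hx
  have hnH : 0 < norm3 (H x) := by simpa [norm3_eq_norm] using hHx
  have hQ : 0 < Q := by positivity
  have hbisector : Q * norm3 (H x) < P * norm3 (-x) := by
    simp only [P, Q]
    field_simp
    linarith [mul_pos hα₁ hnx]
  obtain ⟨hc, hcP⟩ := reflection_coeff_pos_and_one_lt (u := toLp 2 (-x)) (h := toLp 2 (H x))
    hQ.le (by rwa [← norm3_eq_norm, ← norm3_eq_norm])
  rw [← WithLp.toLp_smul, ← WithLp.toLp_smul, ← WithLp.toLp_add, ← hΩPQ, ← dot3_eq_inner,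
    ← dot3_eq_inner] at hc hcP
  set c := 2 * (dot3 (-x) Ω / dot3 Ω Ω)
  have hout : refl3 (-x) Ω = (1 - c * P) • x + (c * Q) • H x :=
    calc refl3 (-x) Ω = x + c • Ω := by rw [refl3, neg_neg]
      _ = (1 - c * P) • x + (c * Q) • H x := by rw [hΩPQ]; module
  have hli : LinearIndependent ℝ ![x, H x] :=
    (LinearIndependent.pair_iff' hx).2 fun s hs ↦ hind ⟨s, hs.symm⟩
  obtain ⟨γ, l, hγ, hl, hmeet, huniq⟩ :=
    hli.existsUnique_pos_smul_eq_add_smul (by linarith : 1 - c * P < 0) (mul_pos hc hQ)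
  rw [hout]
  exact ⟨γ, l, hγ, hl, hmeet, fun γ' l' _ _ ↦ huniq γ' l'⟩
end
end

section
/- Let H: ℝ³ → ℝ³ and ω₁, ω₂: ℝ³ → ℝ be continuously differentiable, with curl(ω₁(x)(-x) + ω₂(x)H(x)) = 0 everywhere. Then at any point x where ω₂(x) = 0, the gradient of ω₂ is orthogonal to the characteristic field: ∇ω₂(x) · ((-x) × H(x)) = 0. -/
/-! By the product rule for curl, and since `curl (y ↦ -y) = 0`, at a zero `x` of `ω₂` the
hypothesis reads `∇ω₁(x) × (-x) + ∇ω₂(x) × H(x) = 0`. Dotting with `-x` kills the first term,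
and the cyclic symmetry of the scalar triple product turns `(-x) · (∇ω₂(x) × H(x))` into
`-∇ω₂(x) · ((-x) × H(x))`. -/

noncomputable section

/-- Partial derivative in the `i`-th coordinate direction. -/
def pd3 (i : Fin 3) (g : (Fin 3 → ℝ) → ℝ) (x : Fin 3 → ℝ) : ℝ :=
  fderiv ℝ g x (Pi.single i 1)

/-- The gradient of a scalar function on ℝ³. -/
def grad3 (g : (Fin 3 → ℝ) → ℝ) (x : Fin 3 → ℝ) : Fin 3 → ℝ := fun i => pd3 i g x

/-- The curl of a vector field on ℝ³. -/
def curl3 (F : (Fin 3 → ℝ) → (Fin 3 → ℝ)) (x : Fin 3 → ℝ) : Fin 3 → ℝ :=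
  ![pd3 1 (fun y => F y 2) x - pd3 2 (fun y => F y 1) x,
    pd3 2 (fun y => F y 0) x - pd3 0 (fun y => F y 2) x,
    pd3 0 (fun y => F y 1) x - pd3 1 (fun y => F y 0) x]

open Matrix

section Calculus

variable {f g : (Fin 3 → ℝ) → ℝ} {F G : (Fin 3 → ℝ) → (Fin 3 → ℝ)} {x : Fin 3 → ℝ}

theorem dot3_eq_dotProduct (v w : Fin 3 → ℝ) : dot3 v w = v ⬝ᵥ w := by
  simp [dot3, dotProduct, Fin.sum_univ_three]

theorem pd3_add (i : Fin 3) (hf : DifferentiableAt ℝ f x) (hg : DifferentiableAt ℝ g x) :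
    pd3 i (fun y => f y + g y) x = pd3 i f x + pd3 i g x := by
  simp [pd3, fderiv_fun_add hf hg]

theorem pd3_mul (i : Fin 3) (hf : DifferentiableAt ℝ f x) (hg : DifferentiableAt ℝ g x) :
    pd3 i (fun y => f y * g y) x = pd3 i f x * g x + f x * pd3 i g x := by
  simp [pd3, fderiv_fun_mul hf hg]
  ring

theorem pd3_neg_apply (i j : Fin 3) (x : Fin 3 → ℝ) :
    pd3 i (fun y => -y j) x = -(Pi.single i 1 : Fin 3 → ℝ) j := by
  have hproj : fderiv ℝ (fun y : Fin 3 → ℝ => y j) x = ContinuousLinearMap.proj j :=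
    (ContinuousLinearMap.proj (R := ℝ) (φ := fun _ : Fin 3 => ℝ) j).fderiv
  simp [pd3, hproj]

theorem curl3_add (hF : DifferentiableAt ℝ F x) (hG : DifferentiableAt ℝ G x) :
    curl3 (fun y => F y + G y) x = curl3 F x + curl3 G x := by
  have hF' := differentiableAt_pi.1 hF
  have hG' := differentiableAt_pi.1 hG
  ext i
  fin_cases i <;>
    simp [curl3, pd3_add _ (hF' _) (hG' _)] <;> ring

theorem curl3_smul (hf : DifferentiableAt ℝ f x) (hG : DifferentiableAt ℝ G x) :
    curl3 (fun y => f y • G y) x = grad3 f x ⨯₃ G x + f x • curl3 G x := by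
  have hG' := differentiableAt_pi.1 hG
  ext i
  fin_cases i <;>
    simp [curl3, grad3, cross_apply, pd3_mul _ hf (hG' _)] <;> ring

theorem curl3_neg_id (x : Fin 3 → ℝ) : curl3 (fun y => -y) x = 0 := by
  ext i
  fin_cases i <;> simp [curl3, pd3_neg_apply]

end Calculus

theorem grad_omega2_perp_charField
    (H : (Fin 3 → ℝ) → (Fin 3 → ℝ)) (ω₁ ω₂ : (Fin 3 → ℝ) → ℝ)
    (hH : ContDiff ℝ 1 H) (hω₁ : ContDiff ℝ 1 ω₁) (hω₂ : ContDiff ℝ 1 ω₂)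
    (hcurl : ∀ x : Fin 3 → ℝ, curl3 (fun y => ω₁ y • (-y) + ω₂ y • H y) x = 0)
    (x : Fin 3 → ℝ) (hx : ω₂ x = 0) :
    dot3 (grad3 ω₂ x) (crossProduct (-x) (H x)) = 0 := by
  have hHx := hH.differentiable one_ne_zero x
  have hω₁x := hω₁.differentiable one_ne_zero x
  have hω₂x := hω₂.differentiable one_ne_zero x
  have hneg : DifferentiableAt ℝ (fun y : Fin 3 → ℝ => -y) x := differentiableAt_fun_id.neg
  have hcurl_at_x : grad3 ω₁ x ⨯₃ (-x) + grad3 ω₂ x ⨯₃ H x = 0 := by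
    rw [← hcurl x, curl3_add (hω₁x.fun_smul hneg) (hω₂x.fun_smul hHx), curl3_smul hω₁x hneg,
      curl3_smul hω₂x hHx, curl3_neg_id, hx]
    simp
  have hperp : -x ⬝ᵥ grad3 ω₂ x ⨯₃ H x = 0 := by
    simpa [dotProduct_add, dot_cross_self] using congrArg (-x ⬝ᵥ ·) hcurl_at_x
  rw [dot3_eq_dotProduct, triple_product_permutation, ← cross_anticomm, dotProduct_neg, hperp,
    neg_zero]
end
end
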